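/- Consider an OCO with unbounded memory instance (𝒳, ℋ, A, B) with H_1 = Σ_{k=0}^∞ k‖A^k‖ < ∞. Let S ≥ 1 divide T, let f_1, …, f_T : ℋ → ℝ be L-Lipschitz continuous with each f̄_t convex and L̄-Lipschitz continuous, let R : 𝒳 → ℝ be α-strongly convex with |R(x) − R(x̃)| ≤ D for all x, x̃ ∈ 𝒳, and let η > 0. Let the decisions be the mini-batch FTRL iterates with batch size S: for each batch b ∈ {1, …, T/S} with rounds T_b = {(b−1)S+1, …, bS} and batch-averaged functions g_b = (1/S) Σ_{s ∈ T_b} f̄_s, the decision in each round of batch b equals a minimizer over 𝒳 of x ↦ Σ_{b' = 1}^{b−1} g_{b'}(x) + R(x)/η. Then the policy regret satisfies Σ_{t=1}^{T} f_t(h_t) − inf_{x ∈ 𝒳} Σ_{t=1}^{T} f̄_t(x) ≤ S D/η + η T L̄² / α + η T L L̄ H_1 / (S α). -/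

import Mathlib

/-!
Mini-batch FTRL is ordinary FTRL run on the batch-averaged losses `g_b`, so the
be-the-leader argument bounds its regret against them by `D / η + N η L̄² / α`
(`N = T / S` batches), which costs a factor `S` when converted back to rounds. Strong convexity
of the FTRL objective also keeps consecutive batch leaders within `η L̄ / α` of each other.
The true history `h_t = ∑ₖ Aᵏ B x_{t-k}` differs from the history of the constant decision `x_t`
by at most `∑ₖ ‖Aᵏ‖ ‖x_{t-k} - x_t‖`, and `x_{t-k}` lies `⌊(t-1)/S⌋ - ⌊(t-1-k)/S⌋` batches
behind `x_t`. Summed over `t` these batch gaps telescope to at most `k T / S`, which produces the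
memory term `η T L L̄ H₁ / (S α)`.
-/

open Finset Filter Topology

section Convexity

variable {E : Type*}

lemma ConvexOn.finset_sum [AddCommGroup E] [Module ℝ E] {s : Set E} {ι : Type*} {t : Finset ι}
    {F : ι → E → ℝ} (hs : Convex ℝ s) (hF : ∀ i ∈ t, ConvexOn ℝ s (F i)) :
    ConvexOn ℝ s (∑ i ∈ t, F i) :=
  Finset.sum_induction F (ConvexOn ℝ s) (fun _ _ => ConvexOn.add) (convexOn_const 0 hs) hF

variable [NormedAddCommGroup E] [NormedSpace ℝ E] {s : Set E} {m c : ℝ} {f g : E → ℝ}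

lemma StrongConvexOn.div_const (hf : StrongConvexOn s m f) (hc : 0 < c) :
    StrongConvexOn s (m / c) (fun x => f x / c) := by
  refine ⟨hf.1, fun x hx y hy a b ha hb hab => ?_⟩
  have := div_le_div_of_nonneg_right (hf.2 hx hy ha hb hab) hc.le
  simp only [smul_eq_mul] at this ⊢
  exact this.trans_eq (by ring)

lemma ConvexOn.add_strongConvexOn (hf : ConvexOn ℝ s f) (hg : StrongConvexOn s m g) :
    StrongConvexOn s m (f + g) := by
  simpa [StrongConvexOn] using (uniformConvexOn_zero.2 hf).add hg

lemma StrongConvexOn.add_sq_le_of_isMinOn {y z : E} (hf : StrongConvexOn s m f) (hz : z ∈ s)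
    (hmin : IsMinOn f s z) (hy : y ∈ s) : f z + m / 2 * ‖y - z‖ ^ 2 ≤ f y := by
  -- compare `f z` with `f` on the segment `a • y + (1 - a) • z`, then let `a → 0`
  have hseg : ∀ a ∈ Set.Ioo (0 : ℝ) 1, (1 - a) * (m / 2 * ‖y - z‖ ^ 2) ≤ f y - f z := by
    rintro a ⟨ha0, ha1⟩
    have hconv := hf.2 hy hz ha0.le (sub_nonneg.2 ha1.le) (add_sub_cancel a 1)
    have hle := hmin (hf.1 hy hz ha0.le (sub_nonneg.2 ha1.le) (add_sub_cancel a 1))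
    simp only [smul_eq_mul, Set.mem_ofPred_eq] at hconv hle
    refine le_of_mul_le_mul_left ?_ ha0
    nlinarith
  have hlim : Tendsto (fun a : ℝ => (1 - a) * (m / 2 * ‖y - z‖ ^ 2)) (𝓝[>] 0)
      (𝓝 (m / 2 * ‖y - z‖ ^ 2)) := by
    have : Continuous fun a : ℝ => (1 - a) * (m / 2 * ‖y - z‖ ^ 2) := by fun_prop
    simpa using (this.tendsto 0).mono_left nhdsWithin_le_nhds
  have := le_of_tendsto hlim (eventually_of_mem (Ioo_mem_nhdsGT one_pos) hseg)
  linarith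

end Convexity

section FTRL

variable {W : Type*} {X : Set W} {g : ℕ → W → ℝ} {R : W → ℝ} {z : ℕ → W} {N : ℕ} {α η K : ℝ}

noncomputable def ftrlObjective (g : ℕ → W → ℝ) (R : W → ℝ) (η : ℝ) (b : ℕ) (w : W) : ℝ :=
  ∑ i ∈ range b, g i w + R w / η

lemma ftrlObjective_succ (b : ℕ) (w : W) :
    ftrlObjective g R η (b + 1) w = ftrlObjective g R η b w + g b w := by
  simp only [ftrlObjective, sum_range_succ]
  ring

structure IsFTRLSequence (X : Set W) (g : ℕ → W → ℝ) (R : W → ℝ) (η : ℝ) (N : ℕ) (z : ℕ → W) :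
    Prop where
  mem : ∀ b < N, z b ∈ X
  isMinOn : ∀ b < N, IsMinOn (ftrlObjective g R η b) X (z b)

lemma IsFTRLSequence.leader_le (hz : IsFTRLSequence X g R η N z) {m : ℕ} (hm : m < N) :
    R (z 0) / η + ∑ b ∈ range m, g b (z (b + 1)) ≤ ftrlObjective g R η m (z m) := by
  induction m with
  | zero => simp [ftrlObjective]
  | succ m ih =>
    rw [sum_range_succ, ftrlObjective_succ]
    have := isMinOn_iff.1 (hz.isMinOn m (by omega)) _ (hz.mem (m + 1) hm)
    linarith [ih (by omega)]

variable [NormedAddCommGroup W] [NormedSpace ℝ W]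

lemma strongConvexOn_ftrlObjective {b : ℕ} (hg : ∀ i < b, ConvexOn ℝ X (g i))
    (hR : StrongConvexOn X α R) (hη : 0 < η) :
    StrongConvexOn X (α / η) (ftrlObjective g R η b) := by
  have hsplit : ftrlObjective g R η b = (∑ i ∈ range b, g i) + fun w => R w / η := by
    ext w
    simp [ftrlObjective, Finset.sum_apply]
  rw [hsplit]
  exact (ConvexOn.finset_sum hR.1 fun i hi => hg i (mem_range.1 hi)).add_strongConvexOn
    (hR.div_const hη)

lemma IsFTRLSequence.ftrlObjective_add_sq_le (hz : IsFTRLSequence X g R η N z)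
    (hg : ∀ b < N, ConvexOn ℝ X (g b)) (hR : StrongConvexOn X α R) (hη : 0 < η)
    {b : ℕ} (hb : b < N) {y : W} (hy : y ∈ X) :
    ftrlObjective g R η b (z b) + α / η / 2 * ‖y - z b‖ ^ 2 ≤ ftrlObjective g R η b y :=
  (strongConvexOn_ftrlObjective (fun i hi => hg i (hi.trans hb)) hR hη).add_sq_le_of_isMinOn
    (hz.mem b hb) (hz.isMinOn b hb) hy

lemma IsFTRLSequence.norm_sub_succ_le (hz : IsFTRLSequence X g R η N z)
    (hg : ∀ b < N, ConvexOn ℝ X (g b)) (hR : StrongConvexOn X α R) (hη : 0 < η) (hα : 0 < α)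
    (hK : 0 ≤ K) (hlip : ∀ b < N, ∀ u ∈ X, ∀ v ∈ X, |g b u - g b v| ≤ K * ‖u - v‖)
    {b : ℕ} (hb : b + 1 < N) :
    ‖z b - z (b + 1)‖ ≤ η * K / α := by
  have h1 := hz.ftrlObjective_add_sq_le hg hR hη (b := b) (by omega) (hz.mem (b + 1) hb)
  have h2 := hz.ftrlObjective_add_sq_le hg hR hη hb (hz.mem b (by omega))
  have hgb := (abs_le.1 (hlip b (by omega) _ (hz.mem b (by omega)) _ (hz.mem (b + 1) hb))).2
  rw [ftrlObjective_succ, ftrlObjective_succ] at h2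
  rw [norm_sub_rev] at h1
  -- adding the two quadratic-growth inequalities gives
  -- `(α / η) r² ≤ g_b(z_b) - g_b(z_{b+1}) ≤ K r`
  have hquad : α / η * ‖z b - z (b + 1)‖ * ‖z b - z (b + 1)‖ ≤ K * ‖z b - z (b + 1)‖ := by
    nlinarith
  rcases (norm_nonneg (z b - z (b + 1))).eq_or_lt with hr | hr
  · rw [← hr]
    positivity
  · have := le_of_mul_le_mul_right hquad hr
    rw [div_mul_eq_mul_div, div_le_iff₀ hη] at this
    rw [le_div_iff₀ hα]
    linarith

lemma IsFTRLSequence.norm_sub_le (hz : IsFTRLSequence X g R η N z)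
    (hg : ∀ b < N, ConvexOn ℝ X (g b)) (hR : StrongConvexOn X α R) (hη : 0 < η) (hα : 0 < α)
    (hK : 0 ≤ K) (hlip : ∀ b < N, ∀ u ∈ X, ∀ v ∈ X, |g b u - g b v| ≤ K * ‖u - v‖)
    {i j : ℕ} (hij : i ≤ j) (hj : j < N) :
    ‖z i - z j‖ ≤ (j - i : ℕ) * (η * K / α) := by
  rw [← dist_eq_norm]
  calc dist (z i) (z j) ≤ ∑ _ ∈ Ico i j, η * K / α :=
        dist_le_Ico_sum_of_dist_le hij fun _ hk => by
          rw [dist_eq_norm]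
          exact hz.norm_sub_succ_le hg hR hη hα hK hlip (by omega)
    _ = (j - i : ℕ) * (η * K / α) := by simp

lemma IsFTRLSequence.regret_le (hz : IsFTRLSequence X g R η N z)
    (hg : ∀ b < N, ConvexOn ℝ X (g b)) (hR : StrongConvexOn X α R) (hη : 0 < η) (hα : 0 < α)
    (hK : 0 ≤ K) (hlip : ∀ b < N, ∀ u ∈ X, ∀ v ∈ X, |g b u - g b v| ≤ K * ‖u - v‖)
    {D : ℝ} (hD : ∀ a ∈ X, ∀ b ∈ X, |R a - R b| ≤ D) {y : W} (hy : y ∈ X) :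
    ∑ b ∈ range N, (g b (z b) - g b y) ≤ D / η + N * (η * K ^ 2 / α) := by
  obtain _ | M := N
  · simpa using div_nonneg ((abs_nonneg _).trans (hD y hy y hy)) hη.le
  have hlead := hz.leader_le (m := M) (by omega)
  have hgrowth := hz.ftrlObjective_add_sq_le hg hR hη (b := M) (by omega) hy
  have hstep : ∀ b ∈ range M, g b (z b) - g b (z (b + 1)) ≤ η * K ^ 2 / α := by
    intro b hb
    have hb := mem_range.1 hb
    calc g b (z b) - g b (z (b + 1)) ≤ K * ‖z b - z (b + 1)‖ :=
          (abs_le.1 (hlip b (by omega) _ (hz.mem b (by omega)) _ (hz.mem (b + 1) (by omega)))).2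
      _ ≤ K * (η * K / α) := by
          gcongr
          exact hz.norm_sub_succ_le hg hR hη hα hK hlip (by omega)
      _ = η * K ^ 2 / α := by ring
  -- the last leader has no successor, so its loss is paid for by quadratic growth at `y`
  have hlast : g M (z M) - g M y - α / η / 2 * ‖y - z M‖ ^ 2 ≤ η * K ^ 2 / α := by
    have hgM := (abs_le.1 (hlip M (by omega) _ (hz.mem M (by omega)) _ hy)).2
    rw [norm_sub_rev] at hgM
    -- AM-GM: `K r - (α / η) r² / 2 ≤ η K² / (2 α)`
    have hamgm : K * ‖y - z M‖ - α / η / 2 * ‖y - z M‖ ^ 2 ≤ η * K ^ 2 / (2 * α) := by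
      rw [div_div, div_mul_eq_mul_div, sub_le_iff_le_add,
        div_add_div _ _ (by positivity) (by positivity), le_div_iff₀ (by positivity)]
      nlinarith [sq_nonneg (η * K - α * ‖y - z M‖), hη, hα]
    have : η * K ^ 2 / (2 * α) ≤ η * K ^ 2 / α := by
      gcongr
      linarith
    linarith
  have hRD : (R y - R (z 0)) / η ≤ D / η := by
    gcongr
    exact (abs_le.1 (hD y hy (z 0) (hz.mem 0 (by omega)))).2
  have hsum := sum_le_card_nsmul _ _ _ hstep
  simp only [card_range, nsmul_eq_mul] at hsum
  simp only [ftrlObjective] at hlead hgrowth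
  rw [sum_sub_distrib] at hsum
  rw [sub_div] at hRD
  rw [sum_range_succ, sum_sub_distrib]
  push_cast
  linarith

end FTRL

lemma sum_Icc_one_eq_sum_range {M : Type*} [AddCommMonoid M] (F : ℕ → M) (T : ℕ) :
    ∑ t ∈ Icc 1 T, F t = ∑ u ∈ range T, F (u + 1) := by
  rw [range_eq_Ico, sum_Ico_add']
  rfl

lemma sum_Ico_div_sub_div_le (S T k : ℕ) :
    ∑ u ∈ Ico k T, ((u / S - (u - k) / S : ℕ) : ℝ) ≤ k * T / S := by
  rcases lt_or_ge T k with hTk | hkT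
  · rw [Ico_eq_empty_of_le hTk.le, sum_empty]
    positivity
  set φ : ℕ → ℝ := fun u => ((u / S : ℕ) : ℝ)
  have hcast : ∀ u, ((u / S - (u - k) / S : ℕ) : ℝ) = φ u - φ (u - k) := fun u =>
    Nat.cast_sub (Nat.div_le_div_right (Nat.sub_le u k))
  have hshift : ∑ u ∈ Ico k T, φ (u - k) = ∑ u ∈ range (T - k), φ u := by
    rw [sum_Ico_eq_sum_range]
    simp only [add_tsub_cancel_left]
  have hsplit1 := sum_range_add_sum_Ico φ hkT
  have hsplit2 := sum_range_add_sum_Ico φ (Nat.sub_le T k)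
  -- the sum telescopes to `∑_{T-k ≤ u < T} φ u - ∑_{u < k} φ u`, and `φ u ≤ T / S` for `u < T`
  have htop : ∑ u ∈ Ico (T - k) T, φ u ≤ k * T / S := by
    calc ∑ u ∈ Ico (T - k) T, φ u ≤ ∑ u ∈ Ico (T - k) T, (T / S : ℝ) := by
          refine sum_le_sum fun u hu => Nat.cast_div_le.trans ?_
          gcongr
          exact_mod_cast (mem_Ico.1 hu).2.le
      _ = k * T / S := by
          rw [sum_const, Nat.card_Ico, Nat.sub_sub_self hkT, nsmul_eq_mul, mul_div_assoc]
  have hbot : 0 ≤ ∑ u ∈ range k, φ u := sum_nonneg fun u _ => Nat.cast_nonneg _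
  simp only [hcast, sum_sub_distrib, hshift]
  linarith

section Memory

variable {W H : Type*} [NormedAddCommGroup W] [NormedSpace ℝ W] [NormedAddCommGroup H]
  [NormedSpace ℝ H] (A : H →L[ℝ] H) {B : W →L[ℝ] H}

lemma history_eq_sum {x : ℕ → W} {h : ℕ → H} (hh0 : h 0 = 0)
    (hh : ∀ t, h (t + 1) = A (h t) + B (x (t + 1))) (t : ℕ) :
    h t = ∑ k ∈ range t, (A ^ k) (B (x (t - k))) := by
  induction t with
  | zero => simpa using hh0
  | succ n ih =>
    rw [hh, ih, sum_range_succ', map_sum, pow_zero, one_apply_eq_self, Nat.sub_zero]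
    congr 1
    refine sum_congr rfl fun k _ => ?_
    rw [pow_succ', Nat.add_sub_add_right, mul_apply_eq_comp]

lemma norm_pow_apply_le (hB : ‖B‖ ≤ 1) (k : ℕ) (v : W) : ‖(A ^ k) (B v)‖ ≤ ‖A ^ k‖ * ‖v‖ :=
  calc ‖(A ^ k) (B v)‖ ≤ ‖A ^ k‖ * (‖B‖ * ‖v‖) :=
        (A ^ k).le_opNorm_of_le (B.le_opNorm v)
    _ ≤ ‖A ^ k‖ * ‖v‖ := by
        gcongr
        exact mul_le_of_le_one_left (norm_nonneg v) hB

lemma norm_sum_pow_apply_sub_le (hB : ‖B‖ ≤ 1) (u : ℕ → W) (y : W) (t : ℕ) :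
    ‖∑ k ∈ range t, (A ^ k) (B (u k)) - ∑ k ∈ range t, (A ^ k) (B y)‖
      ≤ ∑ k ∈ range t, ‖A ^ k‖ * ‖u k - y‖ := by
  rw [← sum_sub_distrib]
  refine (norm_sum_le _ _).trans (sum_le_sum fun k _ => ?_)
  rw [← map_sub, ← map_sub]
  exact norm_pow_apply_le A hB k _

lemma sum_norm_history_sub_le (hB : ‖B‖ ≤ 1) {x : ℕ → W} {h : ℕ → H} (hh0 : h 0 = 0)
    (hh : ∀ t, h (t + 1) = A (h t) + B (x (t + 1))) {S T : ℕ} {c : ℝ} (hc : 0 ≤ c)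
    (hx : ∀ t' t, 1 ≤ t' → t' ≤ t → t ≤ T →
      ‖x t' - x t‖ ≤ c * ((t - 1) / S - (t' - 1) / S : ℕ)) :
    ∑ t ∈ Icc 1 T, ‖h t - ∑ k ∈ range t, (A ^ k) (B (x t))‖
      ≤ c * T / S * ∑ k ∈ range T, k * ‖A ^ k‖ := by
  calc ∑ t ∈ Icc 1 T, ‖h t - ∑ k ∈ range t, (A ^ k) (B (x t))‖
      ≤ ∑ t ∈ Icc 1 T, ∑ k ∈ range t,
          ‖A ^ k‖ * (c * ((t - 1) / S - (t - 1 - k) / S : ℕ)) := by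
        refine sum_le_sum fun t ht => ?_
        obtain ⟨ht1, htT⟩ := mem_Icc.1 ht
        rw [history_eq_sum A hh0 hh]
        refine (norm_sum_pow_apply_sub_le A hB (fun k => x (t - k)) _ t).trans
          (sum_le_sum fun k hk => ?_)
        have hk := mem_range.1 hk
        gcongr
        rw [show t - 1 - k = t - k - 1 by omega]
        exact hx _ _ (by omega) (by omega) htT
    _ = ∑ u ∈ range T, ∑ k ∈ range (u + 1),
          ‖A ^ k‖ * (c * (u / S - (u - k) / S : ℕ)) := by
        simp only [sum_Icc_one_eq_sum_range, Nat.add_sub_cancel]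
    _ = ∑ k ∈ range T, ∑ u ∈ Ico k T, ‖A ^ k‖ * (c * (u / S - (u - k) / S : ℕ)) := by
        simp only [range_eq_Ico]
        exact (sum_Ico_Ico_comm 0 T _).symm
    _ = ∑ k ∈ range T, ‖A ^ k‖ * c * ∑ u ∈ Ico k T, ((u / S - (u - k) / S : ℕ) : ℝ) := by
        simp only [mul_sum, mul_assoc]
    _ ≤ ∑ k ∈ range T, ‖A ^ k‖ * c * (k * T / S) := by
        gcongr with k
        exact sum_Ico_div_sub_div_le S T k
    _ = c * T / S * ∑ k ∈ range T, k * ‖A ^ k‖ := by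
        rw [mul_sum]
        exact sum_congr rfl fun k _ => by ring

end Memory

section MiniBatch

lemma sum_Icc_one_mul_eq_sum_batches {M : Type*} [AddCommMonoid M] (F : ℕ → M) (S N : ℕ) :
    ∑ t ∈ Icc 1 (S * N), F t = ∑ b ∈ range N, ∑ t ∈ Icc (b * S + 1) ((b + 1) * S), F t := by
  have hIcc : ∀ m, Icc 1 m = Ioc 0 m := Icc_add_one_left_eq_Ioc 0
  induction N with
  | zero => simp
  | succ n ih =>
    rw [sum_range_succ, ← ih, Icc_add_one_left_eq_Ioc, hIcc, hIcc, mul_comm n S,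
      mul_comm (n + 1) S]
    exact (sum_Ioc_consecutive F (Nat.zero_le _) (by nlinarith)).symm

variable {S N b t : ℕ}

lemma div_eq_of_mem_batch (ht : t ∈ Icc (b * S + 1) ((b + 1) * S)) : (t - 1) / S = b := by
  obtain ⟨h1, h2⟩ := mem_Icc.1 ht
  exact Nat.div_eq_of_lt_le (by omega) (by omega)

lemma one_le_and_le_of_mem_batch (hb : b < N) (ht : t ∈ Icc (b * S + 1) ((b + 1) * S)) :
    1 ≤ t ∧ t ≤ S * N := by
  have := Nat.mul_le_mul_right S (Nat.succ_le_of_lt hb)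
  rw [mem_Icc] at ht
  constructor <;> nlinarith

variable {W : Type*} {X : Set W} {F : ℕ → W → ℝ} {R : W → ℝ} {x : ℕ → W} {η K : ℝ}

noncomputable def batchLoss (F : ℕ → W → ℝ) (S b : ℕ) (w : W) : ℝ :=
  (S : ℝ)⁻¹ * ∑ t ∈ Icc (b * S + 1) ((b + 1) * S), F t w

lemma sum_Icc_one_mul_eq_mul_sum_batchLoss (hS : 1 ≤ S) {z : ℕ → W}
    (hx : ∀ b < N, ∀ t ∈ Icc (b * S + 1) ((b + 1) * S), x t = z b) :
    ∑ t ∈ Icc 1 (S * N), F t (x t) = S * ∑ b ∈ range N, batchLoss F S b (z b) := by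
  rw [sum_Icc_one_mul_eq_sum_batches, mul_sum]
  refine sum_congr rfl fun b hb => ?_
  rw [batchLoss, ← mul_assoc, mul_inv_cancel₀ (by positivity), one_mul]
  exact sum_congr rfl fun t ht => by rw [hx b (mem_range.1 hb) t ht]

lemma isFTRLSequence_batchLoss (hmin : ∀ b, 1 ≤ b → b ≤ N → x ((b - 1) * S + 1) ∈ X ∧
      ∀ y ∈ X,
        (∑ b' ∈ Icc 1 (b - 1), (S : ℝ)⁻¹ *
            ∑ s ∈ Icc ((b' - 1) * S + 1) (b' * S), F s (x ((b - 1) * S + 1)))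
            + R (x ((b - 1) * S + 1)) / η
          ≤ (∑ b' ∈ Icc 1 (b - 1), (S : ℝ)⁻¹ * ∑ s ∈ Icc ((b' - 1) * S + 1) (b' * S), F s y)
            + R y / η) :
    IsFTRLSequence X (batchLoss F S) R η N (fun b => x (b * S + 1)) where
  mem b hb := by simpa using (hmin (b + 1) (by omega) (by omega)).1
  isMinOn b hb := by
    have := (hmin (b + 1) (by omega) (by omega)).2
    simp only [Nat.add_sub_cancel, sum_Icc_one_eq_sum_range] at this
    exact isMinOn_iff.2 fun y hy => by simpa [ftrlObjective, batchLoss] using this y hy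

lemma convexOn_batchLoss [AddCommGroup W] [Module ℝ W] (hX : Convex ℝ X)
    (hF : ∀ t, 1 ≤ t → t ≤ S * N → ConvexOn ℝ X (F t)) (hb : b < N) :
    ConvexOn ℝ X (batchLoss F S b) := by
  have : batchLoss F S b = (S : ℝ)⁻¹ • ∑ t ∈ Icc (b * S + 1) ((b + 1) * S), F t := by
    ext w
    simp [batchLoss, Finset.sum_apply]
  rw [this]
  refine (ConvexOn.finset_sum hX fun t ht => ?_).smul (by positivity)
  exact hF t (one_le_and_le_of_mem_batch hb ht).1 (one_le_and_le_of_mem_batch hb ht).2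

lemma abs_batchLoss_sub_le [SeminormedAddCommGroup W] (hS : 1 ≤ S)
    (hlip : ∀ t, 1 ≤ t → t ≤ S * N → ∀ u ∈ X, ∀ v ∈ X, |F t u - F t v| ≤ K * ‖u - v‖)
    (hb : b < N) {u v : W} (hu : u ∈ X) (hv : v ∈ X) :
    |batchLoss F S b u - batchLoss F S b v| ≤ K * ‖u - v‖ := by
  have hcard : #(Icc (b * S + 1) ((b + 1) * S)) = S := by
    rw [Nat.card_Icc, add_one_mul]
    omega
  calc |batchLoss F S b u - batchLoss F S b v|
      = (S : ℝ)⁻¹ * |∑ t ∈ Icc (b * S + 1) ((b + 1) * S), (F t u - F t v)| := by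
        rw [batchLoss, batchLoss, ← mul_sub, abs_mul, abs_inv, Nat.abs_cast, sum_sub_distrib]
    _ ≤ (S : ℝ)⁻¹ * (S * (K * ‖u - v‖)) := by
        gcongr
        refine (abs_sum_le_sum_abs _ _).trans ?_
        simpa [hcard] using sum_le_card_nsmul _ _ _ fun t ht =>
          hlip t (one_le_and_le_of_mem_batch hb ht).1 (one_le_and_le_of_mem_batch hb ht).2 u hu v hv
    _ = K * ‖u - v‖ := by
        rw [← mul_assoc, inv_mul_cancel₀ (by positivity), one_mul]

variable [NormedAddCommGroup W] [NormedSpace ℝ W] {α D : ℝ}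

lemma minibatch_regret_le (hS : 1 ≤ S) (hα : 0 < α) (hη : 0 < η) (hK : 0 ≤ K)
    (hR : StrongConvexOn X α R) (hD : ∀ a ∈ X, ∀ b ∈ X, |R a - R b| ≤ D)
    (hF : ∀ t, 1 ≤ t → t ≤ S * N → ConvexOn ℝ X (F t))
    (hlip : ∀ t, 1 ≤ t → t ≤ S * N → ∀ u ∈ X, ∀ v ∈ X, |F t u - F t v| ≤ K * ‖u - v‖)
    (hconst : ∀ t, 1 ≤ t → t ≤ S * N → x t = x ((t - 1) / S * S + 1))
    (hz : IsFTRLSequence X (batchLoss F S) R η N (fun b => x (b * S + 1))) {y : W} (hy : y ∈ X) :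
    ∑ t ∈ Icc 1 (S * N), F t (x t) - ∑ t ∈ Icc 1 (S * N), F t y
      ≤ S * D / η + η * (S * N : ℕ) * K ^ 2 / α := by
  have hregret := hz.regret_le (fun b hb => convexOn_batchLoss hR.1 hF hb) hR hη hα hK
    (fun b hb u hu v hv => abs_batchLoss_sub_le hS hlip hb hu hv) hD hy
  rw [sum_Icc_one_mul_eq_mul_sum_batchLoss hS (z := fun b => x (b * S + 1)) fun b hb t ht => by
      rw [hconst t (one_le_and_le_of_mem_batch hb ht).1 (one_le_and_le_of_mem_batch hb ht).2,
        div_eq_of_mem_batch ht],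
    sum_Icc_one_mul_eq_mul_sum_batchLoss hS (z := fun _ => y) fun _ _ _ _ => rfl,
    ← mul_sub, ← sum_sub_distrib]
  calc (S : ℝ) * ∑ b ∈ range N, (batchLoss F S b (x (b * S + 1)) - batchLoss F S b y)
      ≤ S * (D / η + N * (η * K ^ 2 / α)) := by gcongr
    _ = S * D / η + η * (S * N : ℕ) * K ^ 2 / α := by
        push_cast
        ring

lemma minibatch_norm_sub_le (hS : 1 ≤ S) (hα : 0 < α) (hη : 0 < η) (hK : 0 ≤ K)
    (hR : StrongConvexOn X α R) (hF : ∀ t, 1 ≤ t → t ≤ S * N → ConvexOn ℝ X (F t))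
    (hlip : ∀ t, 1 ≤ t → t ≤ S * N → ∀ u ∈ X, ∀ v ∈ X, |F t u - F t v| ≤ K * ‖u - v‖)
    (hconst : ∀ t, 1 ≤ t → t ≤ S * N → x t = x ((t - 1) / S * S + 1))
    (hz : IsFTRLSequence X (batchLoss F S) R η N (fun b => x (b * S + 1)))
    (t' t : ℕ) (ht' : 1 ≤ t') (ht't : t' ≤ t) (ht : t ≤ S * N) :
    ‖x t' - x t‖ ≤ η * K / α * ((t - 1) / S - (t' - 1) / S : ℕ) := by
  rw [hconst t' ht' (by omega), hconst t (by omega) ht, mul_comm (η * K / α)]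
  refine hz.norm_sub_le (fun b hb => convexOn_batchLoss hR.1 hF hb) hR hη hα hK
    (fun b hb u hu v hv => abs_batchLoss_sub_le hS hlip hb hu hv)
    (Nat.div_le_div_right (by omega)) ?_
  exact Nat.div_lt_of_lt_mul (by omega)

end MiniBatch

theorem stmt_18_general
    {W : Type*} [NormedAddCommGroup W] [InnerProductSpace ℝ W]
    {H : Type*} [NormedAddCommGroup H] [NormedSpace ℝ H]
    (X : Set W)
    (A : H →L[ℝ] H) (B : W →L[ℝ] H) (hB : ‖B‖ ≤ 1)
    (hH1 : Summable fun k : ℕ => (k : ℝ) * ‖A ^ k‖)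
    (S T : ℕ) (hS : 1 ≤ S) (hST : S ∣ T)
    (f : ℕ → H → ℝ) (L Lbar : ℝ) (hL : 0 ≤ L) (hLbar : 0 ≤ Lbar)
    (hf : ∀ t, 1 ≤ t → t ≤ T → ∀ a b : H, |f t a - f t b| ≤ L * ‖a - b‖)
    (hconv : ∀ t, 1 ≤ t → t ≤ T →
      ConvexOn ℝ X (fun x : W => f t (∑ k ∈ Finset.range t, (A ^ k) (B x))))
    (hlipbar : ∀ t, 1 ≤ t → t ≤ T → ∀ a ∈ X, ∀ b ∈ X,
      |f t (∑ k ∈ Finset.range t, (A ^ k) (B a)) - f t (∑ k ∈ Finset.range t, (A ^ k) (B b))|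
        ≤ Lbar * ‖a - b‖)
    (R : W → ℝ) (α : ℝ) (hα : 0 < α) (hR : StrongConvexOn X α R)
    (D : ℝ) (hD : ∀ a ∈ X, ∀ b ∈ X, |R a - R b| ≤ D)
    (η : ℝ) (hη : 0 < η)
    (x : ℕ → W)
    -- the decision is constant within each batch
    (hconst : ∀ t, 1 ≤ t → t ≤ T → x t = x ((t - 1) / S * S + 1))
    -- the decision at the start of batch `b` minimizes the mini-batch FTRL objective
    (hmin : ∀ b, 1 ≤ b → b ≤ T / S → x ((b - 1) * S + 1) ∈ X ∧
      ∀ y ∈ X,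
        (∑ b' ∈ Finset.Icc 1 (b - 1), (S : ℝ)⁻¹ *
            ∑ s ∈ Finset.Icc ((b' - 1) * S + 1) (b' * S),
              f s (∑ k ∈ Finset.range s, (A ^ k) (B (x ((b - 1) * S + 1)))))
            + R (x ((b - 1) * S + 1)) / η
          ≤ (∑ b' ∈ Finset.Icc 1 (b - 1), (S : ℝ)⁻¹ *
              ∑ s ∈ Finset.Icc ((b' - 1) * S + 1) (b' * S),
                f s (∑ k ∈ Finset.range s, (A ^ k) (B y)))
            + R y / η)
    (h : ℕ → H) (hh0 : h 0 = 0) (hh : ∀ t : ℕ, h (t + 1) = A (h t) + B (x (t + 1))) :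
    ∀ y ∈ X,
      (∑ t ∈ Finset.Icc 1 T, f t (h t))
          - (∑ t ∈ Finset.Icc 1 T, f t (∑ k ∈ Finset.range t, (A ^ k) (B y)))
        ≤ S * D / η + η * T * Lbar ^ 2 / α
            + η * T * L * Lbar * (∑' k : ℕ, (k : ℝ) * ‖A ^ k‖) / (S * α) := by
  intro y hy
  obtain ⟨N, rfl⟩ := hST
  rw [Nat.mul_div_cancel_left N hS] at hmin
  have hz := isFTRLSequence_batchLoss (F := fun t w => f t (∑ k ∈ range t, (A ^ k) (B w))) hmin
  have hregret := minibatch_regret_le hS hα hη hLbar hR hD hconv hlipbar hconst hz hy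
  have hmemory := sum_norm_history_sub_le A hB hh0 hh (by positivity)
    (minibatch_norm_sub_le hS hα hη hLbar hR hconv hlipbar hconst hz)
  have hrounds : ∑ t ∈ Icc 1 (S * N), f t (h t)
        - ∑ t ∈ Icc 1 (S * N), f t (∑ k ∈ range t, (A ^ k) (B (x t)))
      ≤ L * ∑ t ∈ Icc 1 (S * N), ‖h t - ∑ k ∈ range t, (A ^ k) (B (x t))‖ := by
    rw [← sum_sub_distrib, mul_sum]
    exact sum_le_sum fun t ht => (abs_le.1 (hf t (mem_Icc.1 ht).1 (mem_Icc.1 ht).2 _ _)).2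
  have hH1_le := hH1.sum_le_tsum (range (S * N)) fun k _ => by positivity
  have hmemory' : L * ∑ t ∈ Icc 1 (S * N), ‖h t - ∑ k ∈ range t, (A ^ k) (B (x t))‖
      ≤ η * (S * N : ℕ) * L * Lbar * (∑' k : ℕ, (k : ℝ) * ‖A ^ k‖) / (S * α) := by
    calc _ ≤ L * (η * Lbar / α * (S * N : ℕ) / S * ∑' k : ℕ, (k : ℝ) * ‖A ^ k‖) := by
          gcongr
          exact hmemory.trans (by gcongr)
      _ = _ := by field_simp
  linarith

/-- regret bound for mini-batch FTRL with unbounded memory.  For an OCO with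
unbounded memory instance with `H₁ = ∑ₖ k‖Aᵏ‖ < ∞`, batch size `S ≥ 1` dividing `T`,
`L`-Lipschitz losses whose unary forms `f̄_t` are convex and `L̄`-Lipschitz on `𝒳`, an
`α`-strongly convex regularizer with oscillation at most `D`, and mini-batch FTRL decisions
(constant within each batch, with the batch-leader minimizing the batch-averaged objective),
the policy regret is at most `S D/η + η T L̄²/α + η T L L̄ H₁/(S α)`. -/
theorem stmt_18
    {W : Type*} [NormedAddCommGroup W] [InnerProductSpace ℝ W] [CompleteSpace W]
    {H : Type*} [NormedAddCommGroup H] [NormedSpace ℝ H] [CompleteSpace H]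
    (X : Set W) (hXne : X.Nonempty) (hXclosed : IsClosed X) (hXconvex : Convex ℝ X)
    (A : H →L[ℝ] H) (B : W →L[ℝ] H) (hB : ‖B‖ ≤ 1)
    (hH1 : Summable fun k : ℕ => (k : ℝ) * ‖A ^ k‖)
    (S T : ℕ) (hS : 1 ≤ S) (hST : S ∣ T)
    (f : ℕ → H → ℝ) (L Lbar : ℝ) (hL : 0 ≤ L) (hLbar : 0 ≤ Lbar)
    (hf : ∀ t, 1 ≤ t → t ≤ T → ∀ a b : H, |f t a - f t b| ≤ L * ‖a - b‖)
    (hconv : ∀ t, 1 ≤ t → t ≤ T →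
      ConvexOn ℝ X (fun x : W => f t (∑ k ∈ Finset.range t, (A ^ k) (B x))))
    (hlipbar : ∀ t, 1 ≤ t → t ≤ T → ∀ a ∈ X, ∀ b ∈ X,
      |f t (∑ k ∈ Finset.range t, (A ^ k) (B a)) - f t (∑ k ∈ Finset.range t, (A ^ k) (B b))|
        ≤ Lbar * ‖a - b‖)
    (R : W → ℝ) (α : ℝ) (hα : 0 < α) (hR : StrongConvexOn X α R)
    (D : ℝ) (hD : ∀ a ∈ X, ∀ b ∈ X, |R a - R b| ≤ D)
    (η : ℝ) (hη : 0 < η)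
    (x : ℕ → W)
    -- the decision is constant within each batch
    (hconst : ∀ t, 1 ≤ t → t ≤ T → x t = x ((t - 1) / S * S + 1))
    -- the decision at the start of batch `b` minimizes the mini-batch FTRL objective
    (hmin : ∀ b, 1 ≤ b → b ≤ T / S → x ((b - 1) * S + 1) ∈ X ∧
      ∀ y ∈ X,
        (∑ b' ∈ Finset.Icc 1 (b - 1), (S : ℝ)⁻¹ *
            ∑ s ∈ Finset.Icc ((b' - 1) * S + 1) (b' * S),
              f s (∑ k ∈ Finset.range s, (A ^ k) (B (x ((b - 1) * S + 1)))))
            + R (x ((b - 1) * S + 1)) / η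
          ≤ (∑ b' ∈ Finset.Icc 1 (b - 1), (S : ℝ)⁻¹ *
              ∑ s ∈ Finset.Icc ((b' - 1) * S + 1) (b' * S),
                f s (∑ k ∈ Finset.range s, (A ^ k) (B y)))
            + R y / η)
    (h : ℕ → H) (hh0 : h 0 = 0) (hh : ∀ t : ℕ, h (t + 1) = A (h t) + B (x (t + 1))) :
    ∀ y ∈ X,
      (∑ t ∈ Finset.Icc 1 T, f t (h t))
          - (∑ t ∈ Finset.Icc 1 T, f t (∑ k ∈ Finset.range t, (A ^ k) (B y)))
        ≤ S * D / η + η * T * Lbar ^ 2 / α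
            + η * T * L * Lbar * (∑' k : ℕ, (k : ℝ) * ‖A ^ k‖) / (S * α) :=
  stmt_18_general X A B hB hH1 S T hS hST f L Lbar hL hLbar hf hconv hlipbar R α hα hR D hD η hη x
    hconst hmin h hh0 hh
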